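/- Let d = 2 and q = 3, and let M = M(a_1,a_2,a_3; l_{1,2}, l_{1,3}, l_{2,3}) be the block upper triangular matrix described in the context, with a_3 > a_1, a_3 > a_2, a_1 + l_{1,2} + l_{1,3} > a_3 and a_2 + l_{2,3} > a_3. Let f(x) = ((a_2 x + l_{2,3})/a_3)². (a) If f has no fixed point in [1,∞), then h(T_M) > log a_3. (b) If f has a fixed point in [1,∞), let x_− be the smallest fixed point of f in [1,∞) and let g(x) = ((a_1 x + l_{1,2} x_− + l_{1,3})/a_3)²; then (i) if g has no fixed point in [1,∞), h(T_M) > log a_3, and (ii) if g has a fixed point in [1,∞), h(T_M) = log a_3. -/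

import Mathlib

open Filter Real

/-- `treeP d M n i` = number of `n`-blocks of the hom Markov tree-shift `T_M`
on the `d`-tree whose root label is `i`. -/
def treeP (d : ℕ) {ι : Type} [Fintype ι] (M : Matrix ι ι ℕ) : ℕ → ι → ℕ
  | 0, _ => 1
  | n + 1, i => (∑ j, M i j * treeP d M n j) ^ d

/-- `|Δ_n| = 1 + d + ⋯ + d^n`. -/
def deltaCard (d n : ℕ) : ℕ := ∑ i ∈ Finset.range (n + 1), d ^ i

/-- Topological entropy of the hom Markov tree-shift `T_M` on the `d`-tree. -/
noncomputable def treeEntropy (d : ℕ) {ι : Type} [Fintype ι] (M : Matrix ι ι ℕ) : ℝ :=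
  Filter.limsup (fun n => Real.log (∑ i, treeP d M n i) / (deltaCard d n : ℝ)) Filter.atTop

/-- `M` has entries in `{0,1}`. -/
def IsBinary {ι : Type} [Fintype ι] (M : Matrix ι ι ℕ) : Prop := ∀ i j, M i j ≤ 1

/-- `M` is irreducible. -/
def MatIrreducible {ι : Type} [Fintype ι] [DecidableEq ι] (M : Matrix ι ι ℕ) : Prop :=
  ∀ i j, ∃ n, 1 ≤ n ∧ 0 < (M ^ n) i j

/-- `M` is the block matrix `[[E_a, R],[O, E_b]]` with `R` binary of constant row sum `l`. -/
def IsMabl (a b l : ℕ) (M : Matrix (Fin (a + b)) (Fin (a + b)) ℕ) : Prop :=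
  (∀ i j, M i j ≤ 1) ∧
  (∀ i j : Fin (a + b), (i : ℕ) < a → (j : ℕ) < a → M i j = 1) ∧
  (∀ i j : Fin (a + b), a ≤ (i : ℕ) → a ≤ (j : ℕ) → M i j = 1) ∧
  (∀ i j : Fin (a + b), a ≤ (i : ℕ) → (j : ℕ) < a → M i j = 0) ∧
  (∀ i : Fin (a + b), (i : ℕ) < a → (∑ j : Fin (a + b), if a ≤ (j : ℕ) then M i j else 0) = l)


/-- `M` is the block upper triangular matrix with diagonal blocks the all-ones
matrices `E_{a i}` and, for `i < j`, `(i,j)`-block a binary matrix of constant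
row sum `l i j`; blocks below the diagonal vanish. -/
def IsBlockMat {q : ℕ} (a : Fin q → ℕ) (l : Fin q → Fin q → ℕ)
    (M : Matrix ((i : Fin q) × Fin (a i)) ((i : Fin q) × Fin (a i)) ℕ) : Prop :=
  (∀ p r, M p r ≤ 1) ∧
  (∀ p r : (i : Fin q) × Fin (a i), p.1 = r.1 → M p r = 1) ∧
  (∀ p r : (i : Fin q) × Fin (a i), r.1 < p.1 → M p r = 0) ∧
  (∀ p : (i : Fin q) × Fin (a i), ∀ j : Fin q, p.1 < j →
    (∑ r : Fin (a j), M p ⟨j, r⟩) = l p.1 j)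

/-! Block counts are constant along each diagonal block, so they are governed by the `3 × 3`
quotient matrix of block row sums. Dividing by the count `a₃ ^ (|Δ_n| - 1)` of blocks rooted in
the last component, the counts rooted in the second and first components become the orbits
`Y (n+1) = f (Y n)` and `X (n+1) = ((a₁ X n + l₁₂ Y n + l₁₃) / a₃) ^ 2` of `1`. Both increase;
`Y` tends to `x₋` when `f` has a fixed point in `[1, ∞)`, and each orbit stays below any such
fixed point of its map and diverges when there is none. Bounded orbits squeeze
`log p(n) / |Δ_n|` onto `log a₃`. A divergent orbit satisfies `Z (n+1) ≥ (c Z n) ^ 2`, so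
`log Z n` grows like `2 ^ n`, comparable to `|Δ_n|`, which lifts the entropy above `log a₃`. -/

open Topology

section TreeShift

variable {d : ℕ} {ι : Type} [Fintype ι] {M : Matrix ι ι ℕ}

theorem treeP_succ (n : ℕ) (i : ι) : treeP d M (n + 1) i = (∑ j, M i j * treeP d M n j) ^ d :=
  rfl

theorem deltaCard_succ (d n : ℕ) : deltaCard d (n + 1) = d * deltaCard d n + 1 := by
  simp only [deltaCard, Finset.sum_range_succ' _ (n + 1), pow_succ', Finset.mul_sum, pow_zero]

theorem deltaCard_pos (d n : ℕ) : 0 < deltaCard d n := by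
  rw [deltaCard, Finset.sum_range_succ', pow_zero]
  omega

theorem deltaCard_two (n : ℕ) : (deltaCard 2 n : ℝ) = 2 * 2 ^ n - 1 := by
  rw [deltaCard, Nat.cast_sum, Finset.sum_congr rfl fun i _ => Nat.cast_pow 2 i,
    geom_sum_eq (by norm_num)]
  ring

theorem sum_treeP_le_card_pow (hM : IsBinary M) (n : ℕ) :
    ∑ i, treeP d M n i ≤ Fintype.card ι ^ deltaCard d n := by
  induction n with
  | zero => simp [treeP, deltaCard]
  | succ n ih =>
    have hrow : ∀ i, (∑ j, M i j * treeP d M n j) ^ d ≤ (Fintype.card ι ^ deltaCard d n) ^ d :=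
      fun i => Nat.pow_le_pow_left ((Finset.sum_le_sum fun j _ =>
        mul_le_of_le_one_left (Nat.zero_le _) (hM i j)).trans ih) d
    calc ∑ i, treeP d M (n + 1) i ≤ ∑ _i : ι, (Fintype.card ι ^ deltaCard d n) ^ d :=
          Finset.sum_le_sum fun i _ => hrow i
      _ = Fintype.card ι ^ deltaCard d (n + 1) := by
          rw [Finset.sum_const, Finset.card_univ, smul_eq_mul, deltaCard_succ, ← pow_mul,
            ← pow_succ', mul_comm]

theorem log_sum_treeP_div_le (hM : IsBinary M) (n : ℕ) :
    Real.log (∑ i, (treeP d M n i : ℝ)) / deltaCard d n ≤ Real.log (Fintype.card ι) := by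
  have hΔ : (0 : ℝ) < deltaCard d n := Nat.cast_pos.2 (deltaCard_pos d n)
  rw [div_le_iff₀ hΔ, ← Nat.cast_sum]
  rcases Nat.eq_zero_or_pos (∑ i, treeP d M n i) with h0 | hpos
  · rw [h0, Nat.cast_zero, Real.log_zero]
    exact mul_nonneg (Real.log_natCast_nonneg _) hΔ.le
  · calc Real.log (∑ i, treeP d M n i : ℕ)
        ≤ Real.log ((Fintype.card ι ^ deltaCard d n : ℕ) : ℝ) :=
          Real.log_le_log (by exact_mod_cast hpos) (by exact_mod_cast sum_treeP_le_card_pow hM n)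
      _ = Real.log (Fintype.card ι) * deltaCard d n := by
          rw [Nat.cast_pow, Real.log_pow, mul_comm]

theorem lt_treeEntropy_of_eventually (hM : IsBinary M) {x ε : ℝ} (hε : 0 < ε)
    (h : ∀ᶠ n in atTop, (x + ε) * deltaCard d n ≤ Real.log (∑ i, (treeP d M n i : ℝ))) :
    x < treeEntropy d M := by
  have hle : x + ε ≤ treeEntropy d M := by
    refine le_limsup_of_frequently_le (h.mono fun n hn => ?_).frequently
      (isBoundedUnder_of ⟨_, log_sum_treeP_div_le hM⟩)
    exact (le_div_iff₀ (Nat.cast_pos.2 (deltaCard_pos d n))).2 hn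
  linarith

theorem treeEntropy_eq_log (hd : 0 < d) {a K : ℝ} (ha : 0 < a)
    (hlow : ∀ n, a ^ deltaCard d n ≤ ∑ i, (treeP d M n i : ℝ))
    (hup : ∀ n, ∑ i, (treeP d M n i : ℝ) ≤ K * a ^ deltaCard d n) :
    treeEntropy d M = Real.log a := by
  have hK : 0 < K := pos_of_mul_pos_left ((pow_pos ha _).trans_le ((hlow 0).trans (hup 0)))
    (pow_pos ha _).le
  have hΔtop : Tendsto (fun n => (deltaCard d n : ℝ)) atTop atTop := by
    refine tendsto_natCast_atTop_atTop.comp (tendsto_atTop_mono (fun n => ?_) tendsto_id)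
    calc n ≤ ∑ _i ∈ Finset.range (n + 1), 1 := by simp
      _ ≤ deltaCard d n := Finset.sum_le_sum fun i _ => Nat.one_le_pow _ _ hd
  have hupper : Tendsto (fun n => Real.log a + Real.log K / deltaCard d n) atTop
      (𝓝 (Real.log a)) := by
    simpa using tendsto_const_nhds.add (tendsto_const_nhds.div_atTop hΔtop)
  refine Tendsto.limsup_eq (tendsto_of_tendsto_of_tendsto_of_le_of_le tendsto_const_nhds hupper
    (fun n => ?_) (fun n => ?_))
  all_goals
    have hΔ : (0 : ℝ) < deltaCard d n := Nat.cast_pos.2 (deltaCard_pos d n)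
    have hpow := pow_pos ha (deltaCard d n)
  · rw [le_div_iff₀ hΔ, mul_comm, ← Real.log_pow]
    exact Real.log_le_log hpow (hlow n)
  · rw [div_le_iff₀ hΔ, add_mul, div_mul_cancel₀ _ hΔ.ne', mul_comm, ← Real.log_pow, add_comm,
      ← Real.log_mul hK.ne' hpow.ne']
    exact Real.log_le_log (hpow.trans_le (hlow n)) (hup n)

end TreeShift

section BlockQuotient

theorem treeP_sigma {ι : Type} [Fintype ι] {κ : ι → Type} [∀ i, Fintype (κ i)] {d : ℕ}
    {M : Matrix (Σ i, κ i) (Σ i, κ i) ℕ} {B : Matrix ι ι ℕ}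
    (hB : ∀ p j, ∑ r, M p ⟨j, r⟩ = B p.1 j) (n : ℕ) (p : Σ i, κ i) :
    treeP d M n p = treeP d B n p.1 := by
  induction n generalizing p with
  | zero => rfl
  | succ n ih =>
    simp only [treeP_succ, Fintype.sum_sigma, ih, ← Finset.sum_mul, hB]

theorem sum_treeP_sigma {ι : Type} [Fintype ι] {κ : ι → Type} [∀ i, Fintype (κ i)] {d : ℕ}
    {M : Matrix (Σ i, κ i) (Σ i, κ i) ℕ} {B : Matrix ι ι ℕ}
    (hB : ∀ p j, ∑ r, M p ⟨j, r⟩ = B p.1 j) (n : ℕ) :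
    ∑ p, treeP d M n p = ∑ i, Fintype.card (κ i) * treeP d B n i := by
  simp [Fintype.sum_sigma, treeP_sigma hB]

/-- The quotient matrix of a block matrix: its `(i, j)` entry is the common row sum of the
`(i, j)` block. -/
def blockQuotient {q : ℕ} (a : Fin q → ℕ) (l : Fin q → Fin q → ℕ) : Matrix (Fin q) (Fin q) ℕ :=
  Matrix.of fun i j => if i = j then a i else if i < j then l i j else 0

theorem IsBlockMat.sum_block {q : ℕ} {a : Fin q → ℕ} {l : Fin q → Fin q → ℕ}
    {M : Matrix ((i : Fin q) × Fin (a i)) ((i : Fin q) × Fin (a i)) ℕ} (hM : IsBlockMat a l M)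
    (p : (i : Fin q) × Fin (a i)) (j : Fin q) :
    ∑ r, M p ⟨j, r⟩ = blockQuotient a l p.1 j := by
  obtain ⟨-, hdiag, hlower, hupper⟩ := hM
  rcases lt_trichotomy p.1 j with h | rfl | h
  · simp [blockQuotient, h.ne, h, hupper p j h]
  · simp [blockQuotient, fun r => hdiag p ⟨p.1, r⟩ rfl]
  · simp [blockQuotient, h.ne', h.not_gt, fun r => hlower p ⟨j, r⟩ h]

end BlockQuotient

noncomputable def forcedOrbit (a c : ℝ) (b : ℕ → ℝ) : ℕ → ℝ
  | 0 => 1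
  | n + 1 => ((a * forcedOrbit a c b n + b n) / c) ^ 2

namespace forcedOrbit

variable {a c : ℝ} {b : ℕ → ℝ}

theorem succ (n : ℕ) : forcedOrbit a c b (n + 1) = ((a * forcedOrbit a c b n + b n) / c) ^ 2 :=
  rfl

theorem nonneg (n : ℕ) : 0 ≤ forcedOrbit a c b n := by
  cases n with
  | zero => exact zero_le_one
  | succ n => exact sq_nonneg _

section

variable (ha : 0 ≤ a) (hc : 0 < c) (hrow : ∀ n, c ≤ a + b n)
include ha hc hrow

theorem one_le (n : ℕ) : 1 ≤ forcedOrbit a c b n := by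
  induction n with
  | zero => exact le_rfl
  | succ n ih =>
    have : 1 ≤ (a * forcedOrbit a c b n + b n) / c := by
      rw [le_div_iff₀ hc]
      nlinarith [hrow n]
    rw [succ]
    nlinarith

theorem monotone (hb : Monotone b) : Monotone (forcedOrbit a c b) := by
  refine monotone_nat_of_le_succ fun n => ?_
  induction n with
  | zero => exact one_le ha hc hrow 1
  | succ n ih =>
    have h₀ := one_le ha hc hrow n
    rw [succ, succ (n + 1)]
    gcongr
    · exact div_nonneg (by nlinarith [hrow n]) hc.le
    · exact hb n.le_succ

theorem le_of_fixed {β x : ℝ} (hbβ : ∀ n, b n ≤ β) (hx : 1 ≤ x)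
    (hfix : ((a * x + β) / c) ^ 2 = x) (n : ℕ) : forcedOrbit a c b n ≤ x := by
  induction n with
  | zero => exact hx
  | succ n ih =>
    have h₀ := one_le ha hc hrow n
    rw [succ, ← hfix]
    gcongr
    · exact div_nonneg (by nlinarith [hrow n]) hc.le
    · exact hbβ n

theorem fixed_of_tendsto {β L : ℝ} (hb : Tendsto b atTop (𝓝 β))
    (hL : Tendsto (forcedOrbit a c b) atTop (𝓝 L)) : 1 ≤ L ∧ ((a * L + β) / c) ^ 2 = L := by
  refine ⟨ge_of_tendsto' hL (one_le ha hc hrow),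
    tendsto_nhds_unique ?_ (hL.comp (tendsto_add_atTop_nat 1))⟩
  exact ((((hL.const_mul a).add hb).div_const c).pow 2).congr fun n => (succ n).symm

theorem tendsto_atTop {β : ℝ} (hb : Monotone b) (hbβ : Tendsto b atTop (𝓝 β))
    (hno : ¬ ∃ x, 1 ≤ x ∧ ((a * x + β) / c) ^ 2 = x) :
    Tendsto (forcedOrbit a c b) atTop atTop := by
  refine (tendsto_atTop_of_monotone (monotone ha hc hrow hb)).resolve_right ?_
  rintro ⟨L, hL⟩
  exact hno ⟨L, fixed_of_tendsto ha hc hrow hbβ hL⟩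

theorem tendsto_least_fixed {β xm : ℝ} (hb : Monotone b) (hbβ : ∀ n, b n ≤ β)
    (hβ : Tendsto b atTop (𝓝 β)) (hxm : IsLeast {x | 1 ≤ x ∧ ((a * x + β) / c) ^ 2 = x} xm) :
    Tendsto (forcedOrbit a c b) atTop (𝓝 xm) := by
  have hle := le_of_fixed ha hc hrow hbβ hxm.1.1 hxm.1.2
  rcases tendsto_atTop_of_monotone (monotone ha hc hrow hb) with htop | ⟨L, hL⟩
  · obtain ⟨n, hn⟩ := (htop.eventually_gt_atTop xm).exists
    exact absurd (hle n) hn.not_ge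
  · have hLxm : L ≤ xm := le_of_tendsto' hL hle
    rwa [le_antisymm hLxm (hxm.2 (fixed_of_tendsto ha hc hrow hβ hL))] at hL

end

theorem sq_le_succ (ha : 0 ≤ a) (hb : ∀ n, 0 ≤ b n) (hc : 0 < c) (hrow : ∀ n, c ≤ a + b n)
    (n : ℕ) : (a / c * forcedOrbit a c b n) ^ 2 ≤ forcedOrbit a c b (n + 1) := by
  have h₀ := one_le ha hc hrow n
  rw [succ, div_mul_eq_mul_div]
  gcongr
  linarith [hb n]

end forcedOrbit

section Growth

variable {v : ℕ → ℝ}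

theorem monotone_log_div_two_pow (hv : ∀ n, 0 < v n) (hsq : ∀ n, v n ^ 2 ≤ v (n + 1)) :
    Monotone fun n => Real.log (v n) / 2 ^ n := by
  refine monotone_nat_of_le_succ fun n => ?_
  have h := Real.log_le_log (pow_pos (hv n) 2) (hsq n)
  rw [Real.log_pow, Nat.cast_ofNat] at h
  rw [div_le_div_iff₀ (by positivity) (by positivity), pow_succ]
  nlinarith [pow_pos (two_pos : (0 : ℝ) < 2) n]

theorem exists_mul_two_pow_le_log (hv : ∀ n, 0 < v n) (hsq : ∀ n, v n ^ 2 ≤ v (n + 1))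
    (htop : Tendsto v atTop atTop) : ∃ η > 0, ∀ᶠ n in atTop, η * 2 ^ n ≤ Real.log (v n) := by
  obtain ⟨N, hN⟩ := (htop.eventually_gt_atTop 1).exists
  refine ⟨Real.log (v N) / 2 ^ N, by have := Real.log_pos hN; positivity, ?_⟩
  filter_upwards [eventually_ge_atTop N] with n hn
  rw [← le_div_iff₀ (by positivity)]
  exact monotone_log_div_two_pow hv hsq hn

end Growth

theorem log_lt_treeEntropy_of_growth {ι : Type} [Fintype ι] {M : Matrix ι ι ℕ} (hM : IsBinary M)
    {a b c : ℝ} {u : ℕ → ℝ} (ha : 0 < a) (hb : 0 < b) (hc : 0 < c) (hu : ∀ n, 0 < u n)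
    (hrec : ∀ n, (c * u n) ^ 2 ≤ u (n + 1)) (htop : Tendsto u atTop atTop)
    (hS : ∀ n, u n * a ^ deltaCard 2 n ≤ b * ∑ i, (treeP 2 M n i : ℝ)) :
    Real.log a < treeEntropy 2 M := by
  obtain ⟨η, hη, hgrowth⟩ := exists_mul_two_pow_le_log (v := fun n => c ^ 2 * u n)
    (fun n => by have := hu n; positivity)
    (fun n => by nlinarith [mul_le_mul_of_nonneg_left (hrec n) (sq_nonneg c)])
    (htop.const_mul_atTop (by positivity))
  have hconst : ∀ᶠ n in atTop, Real.log (c ^ 2 * b) ≤ η / 2 * 2 ^ n :=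
    ((tendsto_pow_atTop_atTop_of_one_lt one_lt_two).const_mul_atTop
      (by positivity)).eventually_ge_atTop _
  refine lt_treeEntropy_of_eventually hM (ε := η / 4) (by positivity) ?_
  filter_upwards [hgrowth, hconst] with n hn hn'
  have hv : 0 < c ^ 2 * u n * a ^ deltaCard 2 n := by have := hu n; positivity
  have hlog : Real.log (c ^ 2 * u n) + deltaCard 2 n * Real.log a
      ≤ Real.log (c ^ 2 * b) + Real.log (∑ i, (treeP 2 M n i : ℝ)) := by
    have hS' : c ^ 2 * u n * a ^ deltaCard 2 n ≤ c ^ 2 * b * ∑ i, (treeP 2 M n i : ℝ) := by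
      rw [mul_assoc, mul_assoc]
      exact mul_le_mul_of_nonneg_left (hS n) (sq_nonneg c)
    have hpos : 0 < ∑ i, (treeP 2 M n i : ℝ) :=
      pos_of_mul_pos_right (hv.trans_le hS') (by positivity)
    rw [← Real.log_pow, ← Real.log_mul (by have := hu n; positivity) (by positivity),
      ← Real.log_mul (by positivity) hpos.ne']
    exact Real.log_le_log hv hS'
  rw [deltaCard_two] at hlog ⊢
  linarith

section ThreeBlocks

variable {a₁ a₂ a₃ l₁₂ l₁₃ l₂₃ : ℕ}

theorem blockQuotient_three :
    blockQuotient ![a₁, a₂, a₃] ![![0, l₁₂, l₁₃], ![0, 0, l₂₃], ![0, 0, 0]] =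
      !![a₁, l₁₂, l₁₃; 0, a₂, l₂₃; 0, 0, a₃] := by
  ext i j
  fin_cases i <;> fin_cases j <;> rfl

noncomputable abbrev middleOrbit (a₂ a₃ l₂₃ : ℕ) : ℕ → ℝ :=
  forcedOrbit a₂ a₃ fun _ => l₂₃

noncomputable abbrev firstOrbit (a₁ a₂ a₃ l₁₂ l₁₃ l₂₃ : ℕ) : ℕ → ℝ :=
  forcedOrbit a₁ a₃ fun n => l₁₂ * middleOrbit a₂ a₃ l₂₃ n + l₁₃

theorem treeP_three_blocks (ha₃ : a₃ ≠ 0) (n : ℕ) :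
    let Q := !![a₁, l₁₂, l₁₃; 0, a₂, l₂₃; 0, 0, a₃]
    (treeP 2 Q n 0 : ℝ) = firstOrbit a₁ a₂ a₃ l₁₂ l₁₃ l₂₃ n * a₃ ^ (deltaCard 2 n - 1) ∧
    (treeP 2 Q n 1 : ℝ) = middleOrbit a₂ a₃ l₂₃ n * a₃ ^ (deltaCard 2 n - 1) ∧
    (treeP 2 Q n 2 : ℝ) = a₃ ^ (deltaCard 2 n - 1) := by
  intro Q
  have hpow : ∀ n, (a₃ : ℝ) ^ (deltaCard 2 (n + 1) - 1) = (a₃ * a₃ ^ (deltaCard 2 n - 1)) ^ 2 := by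
    intro n
    rw [deltaCard_succ, Nat.add_sub_cancel, mul_pow_sub_one (deltaCard_pos 2 n).ne', ← pow_mul,
      mul_comm]
  have ha : (a₃ : ℝ) ≠ 0 := Nat.cast_ne_zero.2 ha₃
  induction n with
  | zero => simp [treeP, deltaCard, forcedOrbit]
  | succ n ih =>
    obtain ⟨h₀, h₁, h₂⟩ := ih
    simp only [treeP_succ, Fin.sum_univ_three, Q, Matrix.of_apply, Matrix.cons_val',
      Matrix.cons_val_zero, Matrix.cons_val_fin_one, Matrix.cons_val_one, Matrix.cons_val,
      Nat.cast_pow, Nat.cast_add, Nat.cast_mul, h₀, h₁, h₂, forcedOrbit.succ, hpow, zero_mul,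
      zero_add, add_zero, and_true]
    constructor <;> field_simp
    ring

theorem IsBlockMat.mul_sum_treeP_three
    {M : Matrix ((i : Fin 3) × Fin (![a₁, a₂, a₃] i)) ((i : Fin 3) × Fin (![a₁, a₂, a₃] i)) ℕ}
    (hM : IsBlockMat ![a₁, a₂, a₃] ![![0, l₁₂, l₁₃], ![0, 0, l₂₃], ![0, 0, 0]] M) (ha₃ : a₃ ≠ 0)
    (n : ℕ) :
    a₃ * ∑ p, (treeP 2 M n p : ℝ) =
      (a₁ * firstOrbit a₁ a₂ a₃ l₁₂ l₁₃ l₂₃ n + a₂ * middleOrbit a₂ a₃ l₂₃ n + a₃) *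
        a₃ ^ deltaCard 2 n := by
  obtain ⟨h₀, h₁, h₂⟩ :=
    treeP_three_blocks (a₁ := a₁) (a₂ := a₂) (l₁₂ := l₁₂) (l₁₃ := l₁₃) (l₂₃ := l₂₃) ha₃ n
  rw [← Nat.cast_sum, sum_treeP_sigma hM.sum_block, blockQuotient_three, ← mul_pow_sub_one
    (deltaCard_pos 2 n).ne']
  push_cast
  simp only [Fintype.card_fin, Fin.sum_univ_three, Matrix.cons_val_zero, Matrix.cons_val_one,
    Matrix.cons_val, h₀, h₁, h₂]
  ring

section Orbits

variable (ha₃ : (0 : ℝ) < a₃) (hrow₂ : (a₃ : ℝ) ≤ a₂ + l₂₃)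
include ha₃ hrow₂

theorem one_le_middleOrbit (n : ℕ) : 1 ≤ middleOrbit a₂ a₃ l₂₃ n :=
  forcedOrbit.one_le (Nat.cast_nonneg _) ha₃ (fun _ => hrow₂) n

theorem middleOrbit_le {x : ℝ} (hx : 1 ≤ x) (hfix : ((a₂ * x + l₂₃) / a₃) ^ 2 = x) (n : ℕ) :
    middleOrbit a₂ a₃ l₂₃ n ≤ x :=
  forcedOrbit.le_of_fixed (Nat.cast_nonneg _) ha₃ (fun _ => hrow₂) (fun _ => le_rfl) hx hfix n

theorem tendsto_middleOrbit_atTop (hno : ¬ ∃ x : ℝ, 1 ≤ x ∧ ((a₂ * x + l₂₃) / a₃) ^ 2 = x) :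
    Tendsto (middleOrbit a₂ a₃ l₂₃) atTop atTop :=
  forcedOrbit.tendsto_atTop (Nat.cast_nonneg _) ha₃ (fun _ => hrow₂) monotone_const
    tendsto_const_nhds hno

theorem tendsto_middleOrbit {xm : ℝ}
    (hxm : IsLeast {x : ℝ | 1 ≤ x ∧ ((a₂ * x + l₂₃) / a₃) ^ 2 = x} xm) :
    Tendsto (middleOrbit a₂ a₃ l₂₃) atTop (𝓝 xm) :=
  forcedOrbit.tendsto_least_fixed (Nat.cast_nonneg _) ha₃ (fun _ => hrow₂) monotone_const
    (fun _ => le_rfl) tendsto_const_nhds hxm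

variable (hrow₁ : (a₃ : ℝ) ≤ a₁ + l₁₂ + l₁₃)
include hrow₁

theorem firstOrbit_rowSum (n : ℕ) : (a₃ : ℝ) ≤ a₁ + (l₁₂ * middleOrbit a₂ a₃ l₂₃ n + l₁₃) := by
  nlinarith [one_le_middleOrbit ha₃ hrow₂ n, (Nat.cast_nonneg l₁₂ : (0 : ℝ) ≤ l₁₂)]

theorem one_le_firstOrbit (n : ℕ) : 1 ≤ firstOrbit a₁ a₂ a₃ l₁₂ l₁₃ l₂₃ n :=
  forcedOrbit.one_le (Nat.cast_nonneg _) ha₃ (firstOrbit_rowSum ha₃ hrow₂ hrow₁) n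

theorem firstOrbit_le {xm x : ℝ} (hxm : 1 ≤ xm) (hxmfix : ((a₂ * xm + l₂₃) / a₃) ^ 2 = xm)
    (hx : 1 ≤ x) (hfix : ((a₁ * x + l₁₂ * xm + l₁₃) / a₃) ^ 2 = x) (n : ℕ) :
    firstOrbit a₁ a₂ a₃ l₁₂ l₁₃ l₂₃ n ≤ x :=
  forcedOrbit.le_of_fixed (Nat.cast_nonneg _) ha₃ (firstOrbit_rowSum ha₃ hrow₂ hrow₁)
    (fun n => add_le_add_left (mul_le_mul_of_nonneg_left
      (middleOrbit_le ha₃ hrow₂ hxm hxmfix n) (Nat.cast_nonneg _)) _)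
    hx (by rwa [← add_assoc]) n

theorem tendsto_firstOrbit_atTop {xm : ℝ}
    (hxm : IsLeast {x : ℝ | 1 ≤ x ∧ ((a₂ * x + l₂₃) / a₃) ^ 2 = x} xm)
    (hno : ¬ ∃ x : ℝ, 1 ≤ x ∧ ((a₁ * x + l₁₂ * xm + l₁₃) / a₃) ^ 2 = x) :
    Tendsto (firstOrbit a₁ a₂ a₃ l₁₂ l₁₃ l₂₃) atTop atTop :=
  forcedOrbit.tendsto_atTop (Nat.cast_nonneg _) ha₃ (firstOrbit_rowSum ha₃ hrow₂ hrow₁)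
    (((forcedOrbit.monotone (Nat.cast_nonneg _) ha₃ (fun _ => hrow₂) monotone_const).const_mul
      (Nat.cast_nonneg _)).add_const _)
    (((tendsto_middleOrbit ha₃ hrow₂ hxm).const_mul _).add_const _)
    (by simpa only [add_assoc] using hno)

theorem IsBlockMat.log_lt_treeEntropy_of_tendsto_atTop
    {M : Matrix ((i : Fin 3) × Fin (![a₁, a₂, a₃] i)) ((i : Fin 3) × Fin (![a₁, a₂, a₃] i)) ℕ}
    (hM : IsBlockMat ![a₁, a₂, a₃] ![![0, l₁₂, l₁₃], ![0, 0, l₂₃], ![0, 0, 0]] M)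
    (ha₁ : (1 : ℝ) ≤ a₁) (ha₂ : (1 : ℝ) ≤ a₂)
    (h : Tendsto (middleOrbit a₂ a₃ l₂₃) atTop atTop ∨
      Tendsto (firstOrbit a₁ a₂ a₃ l₁₂ l₁₃ l₂₃) atTop atTop) :
    Real.log a₃ < treeEntropy 2 M := by
  have hY := one_le_middleOrbit ha₃ hrow₂
  have hX := one_le_firstOrbit ha₃ hrow₂ hrow₁
  have hS (n : ℕ) := hM.mul_sum_treeP_three (Nat.cast_pos.1 ha₃).ne' n
  rcases h with h | h
  · refine log_lt_treeEntropy_of_growth hM.1 ha₃ ha₃ (div_pos (by linarith) ha₃)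
      (fun n => by linarith [hY n])
      (forcedOrbit.sq_le_succ (Nat.cast_nonneg _) (fun _ => Nat.cast_nonneg _) ha₃ fun _ => hrow₂)
      h fun n => ?_
    rw [hS n]
    exact mul_le_mul_of_nonneg_right (by nlinarith [hY n, hX n]) (by positivity)
  · refine log_lt_treeEntropy_of_growth hM.1 ha₃ ha₃ (div_pos (by linarith) ha₃)
      (fun n => by linarith [hX n])
      (forcedOrbit.sq_le_succ (Nat.cast_nonneg _) (fun n => by nlinarith [hY n]) ha₃
        (firstOrbit_rowSum ha₃ hrow₂ hrow₁)) h fun n => ?_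
    rw [hS n]
    exact mul_le_mul_of_nonneg_right (by nlinarith [hY n, hX n]) (by positivity)

end Orbits

theorem IsBlockMat.treeEntropy_eq_log_of_bounded
    {M : Matrix ((i : Fin 3) × Fin (![a₁, a₂, a₃] i)) ((i : Fin 3) × Fin (![a₁, a₂, a₃] i)) ℕ}
    (hM : IsBlockMat ![a₁, a₂, a₃] ![![0, l₁₂, l₁₃], ![0, 0, l₂₃], ![0, 0, 0]] M)
    (ha₃ : (0 : ℝ) < a₃) {xm xs : ℝ} (hY : ∀ n, middleOrbit a₂ a₃ l₂₃ n ≤ xm)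
    (hX : ∀ n, firstOrbit a₁ a₂ a₃ l₁₂ l₁₃ l₂₃ n ≤ xs) :
    treeEntropy 2 M = Real.log a₃ := by
  have hS (n : ℕ) := hM.mul_sum_treeP_three (Nat.cast_pos.1 ha₃).ne' n
  refine treeEntropy_eq_log two_pos ha₃ (K := (a₁ * xs + a₂ * xm + a₃) / a₃)
    (fun n => le_of_mul_le_mul_left ?_ ha₃) (fun n => ?_)
  · rw [hS n]
    have hY₀ : 0 ≤ middleOrbit a₂ a₃ l₂₃ n := forcedOrbit.nonneg n
    have hX₀ : 0 ≤ firstOrbit a₁ a₂ a₃ l₁₂ l₁₃ l₂₃ n := forcedOrbit.nonneg n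
    exact mul_le_mul_of_nonneg_right (by nlinarith) (by positivity)
  · rw [div_mul_eq_mul_div, le_div_iff₀ ha₃, mul_comm, hS n]
    gcongr
    exacts [hX n, hY n]

end ThreeBlocks

theorem treeEntropy_three_blocks_classification_general (a₁ a₂ a₃ l₁₂ l₁₃ l₂₃ : ℕ)
    (ha₁ : 1 ≤ a₁) (ha₂ : 1 ≤ a₂) (h₂₃ : a₂ < a₃)
    (hrow₁ : a₃ < a₁ + l₁₂ + l₁₃) (hrow₂ : a₃ < a₂ + l₂₃)
    (M : Matrix ((i : Fin 3) × Fin (![a₁, a₂, a₃] i)) ((i : Fin 3) × Fin (![a₁, a₂, a₃] i)) ℕ)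
    (hM : IsBlockMat ![a₁, a₂, a₃] ![![0, l₁₂, l₁₃], ![0, 0, l₂₃], ![0, 0, 0]] M) :
    ((¬ ∃ x : ℝ, 1 ≤ x ∧ (((a₂ : ℝ) * x + l₂₃) / a₃) ^ 2 = x) →
      treeEntropy 2 M > Real.log a₃) ∧
    (∀ xm : ℝ, IsLeast {x : ℝ | 1 ≤ x ∧ (((a₂ : ℝ) * x + l₂₃) / a₃) ^ 2 = x} xm →
      ((¬ ∃ x : ℝ, 1 ≤ x ∧ (((a₁ : ℝ) * x + l₁₂ * xm + l₁₃) / a₃) ^ 2 = x) →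
        treeEntropy 2 M > Real.log a₃) ∧
      ((∃ x : ℝ, 1 ≤ x ∧ (((a₁ : ℝ) * x + l₁₂ * xm + l₁₃) / a₃) ^ 2 = x) →
        treeEntropy 2 M = Real.log a₃)) := by
  have ha₃ : (0 : ℝ) < a₃ := by exact_mod_cast (by omega : 0 < a₃)
  have hrow₁' : (a₃ : ℝ) ≤ a₁ + l₁₂ + l₁₃ := by exact_mod_cast hrow₁.le
  have hrow₂' : (a₃ : ℝ) ≤ a₂ + l₂₃ := by exact_mod_cast hrow₂.le
  have hgrowth := hM.log_lt_treeEntropy_of_tendsto_atTop ha₃ hrow₂' hrow₁'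
    (by exact_mod_cast ha₁) (by exact_mod_cast ha₂)
  refine ⟨fun hno => hgrowth (.inl (tendsto_middleOrbit_atTop ha₃ hrow₂' hno)),
    fun xm hxm => ⟨fun hno => hgrowth (.inr (tendsto_firstOrbit_atTop ha₃ hrow₂' hrow₁' hxm hno)),
      fun ⟨xs, hxs₁, hxs⟩ => ?_⟩⟩
  exact hM.treeEntropy_eq_log_of_bounded ha₃ (middleOrbit_le ha₃ hrow₂' hxm.1.1 hxm.1.2)
    (firstOrbit_le ha₃ hrow₂' hrow₁' hxm.1.1 hxm.1.2 hxs₁ hxs)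

/-- **Theorem 3.5.** Case `d = 2`, three irreducible components `E_{a₁}, E_{a₂}, E_{a₃}`,
with `a₁ + l₁₂ + l₁₃ > a₃` and `a₂ + l₂₃ > a₃`.  Let `f(x) = ((a₂x + l₂₃)/a₃)²`.
If `f` has no fixed point in `[1,∞)`, then `h(T_M) > log a₃`.  If it does, let `x₋` be
its smallest fixed point in `[1,∞)` and `g(x) = ((a₁x + l₁₂x₋ + l₁₃)/a₃)²`; then
`h(T_M) > log a₃` if `g` has no fixed point in `[1,∞)`, and `h(T_M) = log a₃` otherwise. -/
theorem treeEntropy_three_blocks_classification (a₁ a₂ a₃ l₁₂ l₁₃ l₂₃ : ℕ)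
    (ha₁ : 1 ≤ a₁) (ha₂ : 1 ≤ a₂) (h₁₃ : a₁ < a₃) (h₂₃ : a₂ < a₃)
    (hl₁₂ : l₁₂ ≤ a₂) (hl₁₃ : l₁₃ ≤ a₃) (hl₂₃ : l₂₃ ≤ a₃)
    (hrow₁ : a₃ < a₁ + l₁₂ + l₁₃) (hrow₂ : a₃ < a₂ + l₂₃)
    (M : Matrix ((i : Fin 3) × Fin (![a₁, a₂, a₃] i)) ((i : Fin 3) × Fin (![a₁, a₂, a₃] i)) ℕ)
    (hM : IsBlockMat ![a₁, a₂, a₃] ![![0, l₁₂, l₁₃], ![0, 0, l₂₃], ![0, 0, 0]] M) :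
    ((¬ ∃ x : ℝ, 1 ≤ x ∧ (((a₂ : ℝ) * x + l₂₃) / a₃) ^ 2 = x) →
      treeEntropy 2 M > Real.log a₃) ∧
    (∀ xm : ℝ, IsLeast {x : ℝ | 1 ≤ x ∧ (((a₂ : ℝ) * x + l₂₃) / a₃) ^ 2 = x} xm →
      ((¬ ∃ x : ℝ, 1 ≤ x ∧ (((a₁ : ℝ) * x + l₁₂ * xm + l₁₃) / a₃) ^ 2 = x) →
        treeEntropy 2 M > Real.log a₃) ∧
      ((∃ x : ℝ, 1 ≤ x ∧ (((a₁ : ℝ) * x + l₁₂ * xm + l₁₃) / a₃) ^ 2 = x) →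
        treeEntropy 2 M = Real.log a₃)) :=
  treeEntropy_three_blocks_classification_general a₁ a₂ a₃ l₁₂ l₁₃ l₂₃ ha₁ ha₂ h₂₃ hrow₁ hrow₂ M hM
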